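/- Fix the T-type setup. Let θ* and θ be two transition models, π a policy, and let R assign to each history τ_h a reward R(τ_h) ≥ 0 with ∑_{h=1}^H R(τ_h) ≤ 1 along every trajectory. Let ξ ≥ 0 and suppose C_B ≥ 1 satisfies 𝒫^{θ′}(τ_h) ≤ C_B·𝒫^{θ*}(τ_h) for every θ′ ∈ B¹_T(θ*), every 1 ≤ h ≤ H, and every history τ_h. Then V^π_{B¹_T(θ*),R,1}(o₁) − V^π_{B¹_T(θ),R,1}(o₁) ≤ C_B·∑_{h=1}^{H−1} E^π_{θ*}[ ∑_{o ∈ 𝒪} |T^{θ*}_h(o|τ_h) − T^θ_h(o|τ_h)| ], where the expectation is over the history τ_h generated by θ* and π. -/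

import Mathlib

open Classical
open scoped BigOperators

/-- A transition model for the T-type setup: at each step `h = k+1` (for
`1 ≤ h ≤ H-1`), given the history `τ_h` (its `k` observations `o_{2:h}` beyond the
fixed initial observation and its `k+1` actions `a_{1:h}`), a probability
distribution over the next observation. -/
structure TransModel (O A : Type) [Fintype O] [Fintype A] where
  T : (k : ℕ) → (Fin k → O) → (Fin (k + 1) → A) → O → ℝ
  nonneg : ∀ k o a ob, 0 ≤ T k o a ob
  sum_one : ∀ k o a, ∑ ob, T k o a ob = 1

/-- A policy: at each step `h = k+1`, given `x_h` (its `k` observations `o_{2:h}`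
and `k` actions `a_{1:h-1}`), a probability distribution over actions. -/
structure TPolicy (O A : Type) [Fintype O] [Fintype A] where
  pi : (k : ℕ) → (Fin k → O) → (Fin k → A) → A → ℝ
  nonneg : ∀ k o a act, 0 ≤ pi k o a act
  sum_one : ∀ k o a, ∑ act, pi k o a act = 1

/-- Append an element at the end of a tuple. -/
def snocF {α : Type} {n : ℕ} (f : Fin n → α) (x : α) : Fin (n + 1) → α :=
  fun i => if h : (i : ℕ) < n then f ⟨i, h⟩ else x

/-- The action-value of policy `π` under transition model `θ` and reward `R`,
at the history `τ_{k+1}`, counting rewards for `n` further steps: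
`Qval θ π R n k o a = E^π_θ[∑_{h'=k+1}^{k+1+n} R(τ_{h'}) | τ_{k+1} = (o, a)]`. -/
noncomputable def Qval {O A : Type} [Fintype O] [Fintype A] (θ : TransModel O A)
    (π : TPolicy O A) (R : (k : ℕ) → (Fin k → O) → (Fin (k + 1) → A) → ℝ) :
    (n : ℕ) → (k : ℕ) → (Fin k → O) → (Fin (k + 1) → A) → ℝ
  | 0, k, o, a => R k o a
  | n + 1, k, o, a => R k o a + ∑ ob : O, θ.T k o a ob *
      ∑ act : A, π.pi (k + 1) (snocF o ob) a act *
        Qval θ π R n (k + 1) (snocF o ob) (snocF a act)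

/-- The value of policy `π` under transition model `θ` and reward `R` at `x_{k+1}`:
`Vval θ π R n k o a = E^π_θ[∑_{h'=k+1}^{k+1+n} R(τ_{h'}) | x_{k+1} = (o, a)]`. -/
noncomputable def Vval {O A : Type} [Fintype O] [Fintype A] (θ : TransModel O A)
    (π : TPolicy O A) (R : (k : ℕ) → (Fin k → O) → (Fin (k + 1) → A) → ℝ)
    (n k : ℕ) (o : Fin k → O) (a : Fin k → A) : ℝ :=
  ∑ act : A, π.pi k o a act * Qval θ π R n k o (snocF a act)

/-- Robust value function `V^π_{B,R,k+1}(x_{k+1})` for horizon `H`. -/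
noncomputable def VB {O A : Type} [Fintype O] [Fintype A] (B : Set (TransModel O A))
    (π : TPolicy O A) (R : (k : ℕ) → (Fin k → O) → (Fin (k + 1) → A) → ℝ)
    (H k : ℕ) (o : Fin k → O) (a : Fin k → A) : ℝ :=
  sInf {w : ℝ | ∃ θ ∈ B, w = Vval θ π R (H - (k + 1)) k o a}

/-- Robust action-value function `Q^π_{B,R,k+1}(τ_{k+1})` for horizon `H`. -/
noncomputable def QB {O A : Type} [Fintype O] [Fintype A] (B : Set (TransModel O A))
    (π : TPolicy O A) (R : (k : ℕ) → (Fin k → O) → (Fin (k + 1) → A) → ℝ)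
    (H k : ℕ) (o : Fin k → O) (a : Fin (k + 1) → A) : ℝ :=
  sInf {w : ℝ | ∃ θ ∈ B, w = Qval θ π R (H - (k + 1)) k o a}

/-- The T-type TV uncertainty set `B¹_T(θ*)` of radius `ξ` for horizon `H`. -/
def B1T {O A : Type} [Fintype O] [Fintype A] (θs : TransModel O A) (ξ : ℝ) (H : ℕ) :
    Set (TransModel O A) :=
  {θ | ∀ k, k < H - 1 → ∀ (o : Fin k → O) (a : Fin (k + 1) → A),
    (∑ ob, |θ.T k o a ob - θs.T k o a ob|) / 2 ≤ ξ}

/-- KL divergence valued in `EReal` (it is `⊤` unless `P ≪ Q`). -/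
noncomputable def KLdiv {X : Type*} [Fintype X] (P Q : X → ℝ) : EReal :=
  if ∀ x, Q x = 0 → P x = 0 then
    (((∑ x, if 0 < P x then P x * Real.log (P x / Q x) else 0) : ℝ) : EReal)
  else ⊤

/-- The T-type KL uncertainty set `B²_T(θ*)` of radius `ξ` for horizon `H`. -/
def B2T {O A : Type} [Fintype O] [Fintype A] (θs : TransModel O A) (ξ : ℝ) (H : ℕ) :
    Set (TransModel O A) :=
  {θ | ∀ k, k < H - 1 → ∀ (o : Fin k → O) (a : Fin (k + 1) → A),
    KLdiv (θ.T k o a) (θs.T k o a) ≤ (ξ : EReal)}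

/-- `𝒫^θ(τ_{k+1})`: the probability of the observation prefix of the history
`τ_{k+1}` under the actions in `τ_{k+1}`, i.e. the product of the transition
probabilities along the history. -/
noncomputable def Pobs {O A : Type} [Fintype O] [Fintype A] (θ : TransModel O A)
    (k : ℕ) (o : Fin k → O) (a : Fin (k + 1) → A) : ℝ :=
  ∏ j : Fin k,
    θ.T j.val (fun i : Fin j.val => o ⟨i.val, by have h1 := i.isLt; have h2 := j.isLt; omega⟩)
      (fun i : Fin (j.val + 1) => a ⟨i.val, by have h1 := i.isLt; have h2 := j.isLt; omega⟩)
      (o j)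

/-- The probability of the history `τ_{k+1}` under transition model `θ` and
policy `π` (transition probabilities times policy probabilities). -/
noncomputable def Ptau {O A : Type} [Fintype O] [Fintype A] (θ : TransModel O A)
    (π : TPolicy O A) (k : ℕ) (o : Fin k → O) (a : Fin (k + 1) → A) : ℝ :=
  Pobs θ k o a *
    ∏ j : Fin (k + 1),
      π.pi j.val (fun i : Fin j.val => o ⟨i.val, by have h1 := i.isLt; have h2 := j.isLt; omega⟩)
        (fun i : Fin j.val => a ⟨i.val, by have h1 := i.isLt; have h2 := j.isLt; omega⟩) (a j)

/-!
Given a model `θ₂` in the ball around `θ`, move every conditional law of `θ*` along the segment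
towards that of `θ₂`, as far as the ball of radius `ξ` allows. The resulting model `θ₁` lies in the
ball around `θ*`, and by the triangle inequality its `L¹`-distance to `θ₂` at every history is at
most `∑ₒ |T^{θ*} − T^θ|`. Since values lie in `[0, 1]`, the simulation lemma bounds
`V_{θ₁} − V_{θ₂}` by the expected `L¹`-distances along trajectories of `θ₁`, and the bound `C_B` on
the likelihood ratio turns that expectation into `C_B` times the one under `θ*`. Taking the infimum
over `θ₂` gives the claim.
-/

lemma sum_mul_le_of_le {ι : Type*} [Fintype ι] {w f : ι → ℝ} {c : ℝ} (hw : ∀ i, 0 ≤ w i)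
    (hw1 : ∑ i, w i = 1) (hf : ∀ i, f i ≤ c) : ∑ i, w i * f i ≤ c :=
  calc ∑ i, w i * f i ≤ ∑ i, w i * c :=
        Finset.sum_le_sum fun i _ => mul_le_mul_of_nonneg_left (hf i) (hw i)
    _ = c := by rw [← Finset.sum_mul, hw1, one_mul]

lemma sum_sub_mul_le_sum_abs_sub {ι : Type*} [Fintype ι] (p q : ι → ℝ) {v : ι → ℝ}
    (hv : ∀ i, |v i| ≤ 1) : ∑ i, (p i - q i) * v i ≤ ∑ i, |p i - q i| :=
  Finset.sum_le_sum fun i _ =>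
    calc (p i - q i) * v i ≤ |p i - q i| * |v i| := (le_abs_self _).trans (abs_mul _ _).le
      _ ≤ |p i - q i| := mul_le_of_le_one_right (abs_nonneg _) (hv i)

lemma exists_mix_l1_le {ι : Type*} [Fintype ι] (p q : ι → ℝ) {ε : ℝ} (hε : 0 ≤ ε) :
    ∃ t ∈ Set.Icc (0 : ℝ) 1, ∑ i, |(1 - t) * p i + t * q i - p i| ≤ ε ∧
      ∑ i, |(1 - t) * p i + t * q i - q i| ≤ max (∑ i, |q i - p i| - ε) 0 := by
  set d := ∑ i, |q i - p i|
  have hd : 0 ≤ d := Finset.sum_nonneg fun i _ => abs_nonneg _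
  have hdist : ∀ t ∈ Set.Icc (0 : ℝ) 1, ∑ i, |(1 - t) * p i + t * q i - p i| = t * d ∧
      ∑ i, |(1 - t) * p i + t * q i - q i| = (1 - t) * d := by
    rintro t ⟨ht0, ht1⟩
    simp only [d, Finset.mul_sum]
    constructor <;> refine Finset.sum_congr rfl fun i _ => ?_
    · rw [show (1 - t) * p i + t * q i - p i = t * (q i - p i) by ring, abs_mul, abs_of_nonneg ht0]
    · rw [show (1 - t) * p i + t * q i - q i = (1 - t) * (p i - q i) by ring, abs_mul,
        abs_of_nonneg (sub_nonneg.2 ht1), abs_sub_comm]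
  by_cases hfar : ε < d
  · have ht : ε / d ∈ Set.Icc (0 : ℝ) 1 := ⟨by positivity, (div_le_one (by linarith)).2 hfar.le⟩
    have hd0 : d ≠ 0 := (hε.trans_lt hfar).ne'
    refine ⟨ε / d, ht, ?_, ?_⟩
    · rw [(hdist _ ht).1, div_mul_cancel₀ _ hd0]
    · rw [(hdist _ ht).2, sub_mul, one_mul, div_mul_cancel₀ _ hd0]
      exact le_max_left _ _
  · refine ⟨1, ⟨zero_le_one, le_rfl⟩, ?_, ?_⟩
    · rw [(hdist 1 ⟨zero_le_one, le_rfl⟩).1]; linarith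
    · rw [(hdist 1 ⟨zero_le_one, le_rfl⟩).2]; simp

section Tuples

variable {α : Type} {n : ℕ}

lemma snocF_eq_snoc (f : Fin n → α) (x : α) : snocF f x = Fin.snoc f x :=
  rfl

lemma snocF_of_lt (f : Fin n → α) (x : α) {i : ℕ} (hi : i < n) (h : i < n + 1) :
    snocF f x ⟨i, h⟩ = f ⟨i, hi⟩ :=
  dif_pos hi

@[simp]
lemma snocF_castSucc (f : Fin n → α) (x : α) (i : Fin n) : snocF f x i.castSucc = f i :=
  dif_pos i.isLt

@[simp]
lemma snocF_last (f : Fin n → α) (x : α) : snocF f x (Fin.last n) = x :=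
  dif_neg (lt_irrefl n)

lemma sum_tuple_succ [Fintype α] (F : (Fin (n + 1) → α) → ℝ) :
    ∑ g, F g = ∑ f : Fin n → α, ∑ x, F (snocF f x) := by
  rw [← (Fin.snocEquiv fun _ => α).sum_comp, Fintype.sum_prod_type, Finset.sum_comm]
  rfl

end Tuples

variable {O A : Type}

noncomputable def rewardPrefix (R : (k : ℕ) → (Fin k → O) → (Fin (k + 1) → A) → ℝ) (k : ℕ)
    (o : Fin k → O) (a : Fin (k + 1) → A) : ℝ :=
  ∑ j : Fin k, R j
    (fun i : Fin j => o ⟨i, by omega⟩)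
    (fun i : Fin (j + 1) => a ⟨i, by omega⟩)

lemma rewardPrefix_snocF (R : (k : ℕ) → (Fin k → O) → (Fin (k + 1) → A) → ℝ) (k : ℕ)
    (o : Fin k → O) (a : Fin (k + 1) → A) (ob : O) (act : A) :
    rewardPrefix R (k + 1) (snocF o ob) (snocF a act) = rewardPrefix R k o a + R k o a := by
  unfold rewardPrefix
  rw [Fin.sum_univ_castSucc]
  simp (disch := omega) only [Fin.val_last, Fin.val_castSucc, snocF_of_lt]

lemma rewardPrefix_nonneg {R : (k : ℕ) → (Fin k → O) → (Fin (k + 1) → A) → ℝ} {H : ℕ}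
    (hR0 : ∀ k, k < H → ∀ o a, 0 ≤ R k o a) {k : ℕ} (hk : k ≤ H) (o : Fin k → O)
    (a : Fin (k + 1) → A) : 0 ≤ rewardPrefix R k o a :=
  Finset.sum_nonneg fun j _ => hR0 j (by omega) _ _

variable [Fintype O] [Fintype A]

lemma Pobs_snocF (θ : TransModel O A) (k : ℕ) (o : Fin k → O) (a : Fin (k + 1) → A)
    (ob : O) (act : A) :
    Pobs θ (k + 1) (snocF o ob) (snocF a act) = Pobs θ k o a * θ.T k o a ob := by
  unfold Pobs
  rw [Fin.prod_univ_castSucc]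
  simp (disch := omega) only [Fin.val_last, Fin.val_castSucc, snocF_of_lt,
    snocF_castSucc, snocF_last]

lemma Ptau_snocF (θ : TransModel O A) (π : TPolicy O A) (k : ℕ) (o : Fin k → O)
    (a : Fin (k + 1) → A) (ob : O) (act : A) :
    Ptau θ π (k + 1) (snocF o ob) (snocF a act)
      = Ptau θ π k o a * θ.T k o a ob * π.pi (k + 1) (snocF o ob) a act := by
  unfold Ptau
  rw [Pobs_snocF, Fin.prod_univ_castSucc]
  simp (disch := omega) only [Fin.val_last, Fin.val_castSucc, snocF_of_lt,
    snocF_castSucc, snocF_last]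
  ring

lemma Pobs_nonneg (θ : TransModel O A) (k : ℕ) (o : Fin k → O) (a : Fin (k + 1) → A) :
    0 ≤ Pobs θ k o a :=
  Finset.prod_nonneg fun _ _ => θ.nonneg _ _ _ _

lemma Ptau_nonneg (θ : TransModel O A) (π : TPolicy O A) (k : ℕ) (o : Fin k → O)
    (a : Fin (k + 1) → A) : 0 ≤ Ptau θ π k o a :=
  mul_nonneg (Pobs_nonneg θ k o a) (Finset.prod_nonneg fun _ _ => π.nonneg _ _ _ _)

/-- `expectHist θ π k f = E^π_θ[f(τ_{k+1})]`. -/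
noncomputable def expectHist (θ : TransModel O A) (π : TPolicy O A) (k : ℕ)
    (f : (Fin k → O) → (Fin (k + 1) → A) → ℝ) : ℝ :=
  ∑ o, ∑ a, Ptau θ π k o a * f o a

lemma expectHist_succ (θ : TransModel O A) (π : TPolicy O A) (k : ℕ)
    (f : (Fin (k + 1) → O) → (Fin (k + 2) → A) → ℝ) :
    expectHist θ π (k + 1) f = expectHist θ π k fun o a =>
      ∑ ob, θ.T k o a ob *
        ∑ act, π.pi (k + 1) (snocF o ob) a act * f (snocF o ob) (snocF a act) := by
  unfold expectHist
  rw [sum_tuple_succ]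
  refine Finset.sum_congr rfl fun o _ => ?_
  simp only [sum_tuple_succ (n := k + 1), Ptau_snocF, Finset.mul_sum, mul_assoc]
  exact Finset.sum_comm

lemma expectHist_zero (θ : TransModel O A) (π : TPolicy O A) (o₀ : Fin 0 → O) (a₀ : Fin 0 → A)
    (f : (Fin 0 → O) → (Fin 1 → A) → ℝ) :
    expectHist θ π 0 f = ∑ act, π.pi 0 o₀ a₀ act * f o₀ (snocF a₀ act) := by
  unfold expectHist Ptau Pobs
  rw [Fintype.sum_unique, sum_tuple_succ, Fintype.sum_unique]
  simp only [Fin.prod_univ_succ, Fin.prod_univ_zero, mul_one, one_mul, Subsingleton.elim _ o₀,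
    Subsingleton.elim _ a₀]
  rfl

section expectHist

variable (θ : TransModel O A) (π : TPolicy O A) {k : ℕ}

lemma expectHist_add (f g : (Fin k → O) → (Fin (k + 1) → A) → ℝ) :
    expectHist θ π k (fun o a => f o a + g o a) = expectHist θ π k f + expectHist θ π k g := by
  simp only [expectHist, mul_add, Finset.sum_add_distrib]

lemma expectHist_mono {f g : (Fin k → O) → (Fin (k + 1) → A) → ℝ} (h : ∀ o a, f o a ≤ g o a) :
    expectHist θ π k f ≤ expectHist θ π k g :=
  Finset.sum_le_sum fun o _ => Finset.sum_le_sum fun a _ =>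
    mul_le_mul_of_nonneg_left (h o a) (Ptau_nonneg θ π k o a)

lemma expectHist_le_mul_of_Pobs_le {θ' : TransModel O A} {C : ℝ}
    (hP : ∀ o a, Pobs θ k o a ≤ C * Pobs θ' k o a)
    {f : (Fin k → O) → (Fin (k + 1) → A) → ℝ} (hf : ∀ o a, 0 ≤ f o a) :
    expectHist θ π k f ≤ C * expectHist θ' π k f := by
  simp only [expectHist, Finset.mul_sum, ← mul_assoc]
  refine Finset.sum_le_sum fun o _ => Finset.sum_le_sum fun a _ => ?_
  refine mul_le_mul_of_nonneg_right ?_ (hf o a)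
  unfold Ptau
  rw [← mul_assoc]
  exact mul_le_mul_of_nonneg_right (hP o a) (Finset.prod_nonneg fun _ _ => π.nonneg _ _ _ _)

end expectHist

section Values

variable (θ : TransModel O A) (π : TPolicy O A)
  {R : (k : ℕ) → (Fin k → O) → (Fin (k + 1) → A) → ℝ} {H : ℕ}

lemma Qval_succ (n k : ℕ) (o : Fin k → O) (a : Fin (k + 1) → A) :
    Qval θ π R (n + 1) k o a
      = R k o a + ∑ ob, θ.T k o a ob * Vval θ π R n (k + 1) (snocF o ob) a :=
  rfl

lemma Qval_nonneg (hR0 : ∀ k, k < H → ∀ o a, 0 ≤ R k o a) :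
    ∀ n k, k + n < H → ∀ o a, 0 ≤ Qval θ π R n k o a := by
  intro n
  induction n with
  | zero => exact fun k hk o a => hR0 k (by omega) o a
  | succ n ih =>
    intro k hk o a
    rw [Qval_succ]
    refine add_nonneg (hR0 k (by omega) o a) (Finset.sum_nonneg fun ob _ =>
      mul_nonneg (θ.nonneg _ _ _ _) (Finset.sum_nonneg fun act _ => ?_))
    exact mul_nonneg (π.nonneg _ _ _ _) (ih (k + 1) (by omega) _ _)

lemma Vval_nonneg (hR0 : ∀ k, k < H → ∀ o a, 0 ≤ R k o a) {n k : ℕ} (hk : k + n < H)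
    (o : Fin k → O) (a : Fin k → A) : 0 ≤ Vval θ π R n k o a :=
  Finset.sum_nonneg fun _ _ => mul_nonneg (π.nonneg _ _ _ _) (Qval_nonneg θ π hR0 n k hk _ _)

lemma rewardPrefix_add_Qval_le_one
    (hR1 : ∀ (o : Fin (H - 1) → O) (a : Fin H → A),
      (∑ k : Fin H, R k.val
        (fun i : Fin k.val => o ⟨i.val, by omega⟩)
        (fun i : Fin (k.val + 1) => a ⟨i.val, by omega⟩))
        ≤ 1) :
    ∀ n k, k + n + 1 = H → ∀ o a, rewardPrefix R k o a + Qval θ π R n k o a ≤ 1 := by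
  intro n
  induction n with
  | zero =>
    intro k hk o a
    subst hk
    have := hR1 o a
    rwa [Fin.sum_univ_castSucc] at this
  | succ n ih =>
    intro k hk o a
    have hnext : ∀ ob act, Qval θ π R n (k + 1) (snocF o ob) (snocF a act)
        ≤ 1 - (rewardPrefix R k o a + R k o a) := fun ob act => by
      have := ih (k + 1) (by omega) (snocF o ob) (snocF a act)
      rw [rewardPrefix_snocF] at this
      linarith
    have hV : ∀ ob, Vval θ π R n (k + 1) (snocF o ob) a ≤ 1 - (rewardPrefix R k o a + R k o a) :=
      fun ob => sum_mul_le_of_le (π.nonneg _ _ a) (π.sum_one _ _ a) (hnext ob)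
    have := sum_mul_le_of_le (θ.nonneg k o a) (θ.sum_one k o a) hV
    rw [Qval_succ]
    linarith

lemma abs_Vval_le_one (hR0 : ∀ k, k < H → ∀ o a, 0 ≤ R k o a)
    (hR1 : ∀ (o : Fin (H - 1) → O) (a : Fin H → A),
      (∑ k : Fin H, R k.val
        (fun i : Fin k.val => o ⟨i.val, by omega⟩)
        (fun i : Fin (k.val + 1) => a ⟨i.val, by omega⟩))
        ≤ 1)
    {n k : ℕ} (hk : k + n + 1 = H) (o : Fin k → O) (a : Fin k → A) :
    |Vval θ π R n k o a| ≤ 1 := by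
  refine abs_le.2 ⟨by linarith [Vval_nonneg θ π hR0 (by omega : k + n < H) o a], ?_⟩
  refine sum_mul_le_of_le (π.nonneg k o a) (π.sum_one k o a) fun act => ?_
  linarith [rewardPrefix_add_Qval_le_one θ π hR1 n k hk o (snocF a act),
    rewardPrefix_nonneg hR0 (by omega : k ≤ H) o (snocF a act)]

end Values

section Simulation

variable (θ₁ θ₂ : TransModel O A) (π : TPolicy O A)
  {R : (k : ℕ) → (Fin k → O) → (Fin (k + 1) → A) → ℝ} {H : ℕ}
  {g : (k : ℕ) → (Fin k → O) → (Fin (k + 1) → A) → ℝ}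

lemma Qval_succ_sub_Qval_succ (n k : ℕ) (o : Fin k → O) (a : Fin (k + 1) → A) :
    Qval θ₁ π R (n + 1) k o a - Qval θ₂ π R (n + 1) k o a
      = ∑ ob, (θ₁.T k o a ob - θ₂.T k o a ob) * Vval θ₂ π R n (k + 1) (snocF o ob) a
        + ∑ ob, θ₁.T k o a ob * ∑ act, π.pi (k + 1) (snocF o ob) a act *
          (Qval θ₁ π R n (k + 1) (snocF o ob) (snocF a act)
            - Qval θ₂ π R n (k + 1) (snocF o ob) (snocF a act)) := by
  simp only [Qval_succ, Vval, mul_sub, sub_mul, Finset.sum_sub_distrib]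
  ring

lemma expectHist_Qval_sub_le
    (hg : ∀ k, k < H - 1 → ∀ o a, ∑ ob, |θ₁.T k o a ob - θ₂.T k o a ob| ≤ g k o a)
    (hV : ∀ n k, k + n + 1 = H → ∀ o a, |Vval θ₂ π R n k o a| ≤ 1) :
    ∀ n k, k + n + 1 = H →
      expectHist θ₁ π k (fun o a => Qval θ₁ π R n k o a - Qval θ₂ π R n k o a)
        ≤ ∑ j ∈ Finset.Ico k (k + n), expectHist θ₁ π j (g j) := by
  intro n
  induction n with
  | zero => intro k _; simp [Qval, expectHist]
  | succ n ih =>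
    intro k hk
    have hnext := ih (k + 1) (by omega)
    rw [expectHist_succ] at hnext
    simp only [Qval_succ_sub_Qval_succ, expectHist_add]
    rw [Finset.sum_eq_sum_Ico_succ_bot (by omega), show k + (n + 1) = k + 1 + n by omega]
    refine add_le_add (expectHist_mono θ₁ π fun o a => ?_) hnext
    exact (sum_sub_mul_le_sum_abs_sub _ _ fun ob => hV n (k + 1) (by omega) _ _).trans
      (hg k (by omega) o a)

theorem Vval_le_Vval_add (hH : 1 ≤ H)
    (hg : ∀ k, k < H - 1 → ∀ o a, ∑ ob, |θ₁.T k o a ob - θ₂.T k o a ob| ≤ g k o a)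
    (hV : ∀ n k, k + n + 1 = H → ∀ o a, |Vval θ₂ π R n k o a| ≤ 1)
    (o₀ : Fin 0 → O) (a₀ : Fin 0 → A) :
    Vval θ₁ π R (H - 1) 0 o₀ a₀
      ≤ Vval θ₂ π R (H - 1) 0 o₀ a₀ + ∑ j ∈ Finset.range (H - 1), expectHist θ₁ π j (g j) := by
  have hsim := expectHist_Qval_sub_le θ₁ θ₂ π hg hV (H - 1) 0 (by omega)
  rw [expectHist_zero θ₁ π o₀ a₀, zero_add, ← Finset.range_eq_Ico] at hsim
  simp only [Vval, mul_sub, Finset.sum_sub_distrib] at hsim ⊢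
  linarith

end Simulation

def TransModel.mix (θ θ' : TransModel O A) (t : (k : ℕ) → (Fin k → O) → (Fin (k + 1) → A) → ℝ)
    (ht : ∀ k o a, t k o a ∈ Set.Icc (0 : ℝ) 1) : TransModel O A where
  T k o a ob := (1 - t k o a) * θ.T k o a ob + t k o a * θ'.T k o a ob
  nonneg k o a ob := add_nonneg (mul_nonneg (sub_nonneg.2 (ht k o a).2) (θ.nonneg k o a ob))
    (mul_nonneg (ht k o a).1 (θ'.nonneg k o a ob))
  sum_one k o a := by
    rw [Finset.sum_add_distrib, ← Finset.mul_sum, ← Finset.mul_sum, θ.sum_one, θ'.sum_one]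
    ring

lemma self_mem_B1T (θ : TransModel O A) {ξ : ℝ} (hξ : 0 ≤ ξ) (H : ℕ) : θ ∈ B1T θ ξ H := by
  intro k _ o a
  simpa using hξ

lemma exists_mem_B1T_l1_le (θstar θ : TransModel O A) {ξ : ℝ} (hξ : 0 ≤ ξ) {H : ℕ}
    {θ₂ : TransModel O A} (hθ₂ : θ₂ ∈ B1T θ ξ H) :
    ∃ θ₁ ∈ B1T θstar ξ H, ∀ k, k < H - 1 → ∀ o a,
      ∑ ob, |θ₁.T k o a ob - θ₂.T k o a ob| ≤ ∑ ob, |θstar.T k o a ob - θ.T k o a ob| := by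
  choose t ht hnear hfar using fun k o a =>
    exists_mix_l1_le (θstar.T k o a) (θ₂.T k o a) (by positivity : 0 ≤ 2 * ξ)
  refine ⟨θstar.mix θ₂ t ht, fun k _ o a => ?_, fun k hk o a => ?_⟩
  · have := hnear k o a
    dsimp only [TransModel.mix]
    linarith
  · have htri : ∑ ob, |θ₂.T k o a ob - θstar.T k o a ob|
        ≤ ∑ ob, |θ₂.T k o a ob - θ.T k o a ob| + ∑ ob, |θstar.T k o a ob - θ.T k o a ob| := by
      rw [← Finset.sum_add_distrib]
      exact Finset.sum_le_sum fun ob _ => dist_triangle_right _ _ (θ.T k o a ob)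
    have := hθ₂ k hk o a
    exact (hfar k o a).trans (max_le (by linarith) (Finset.sum_nonneg fun _ _ => abs_nonneg _))

lemma VB_le_VB_add {B₁ B₂ : Set (TransModel O A)} {π : TPolicy O A}
    {R : (k : ℕ) → (Fin k → O) → (Fin (k + 1) → A) → ℝ} {H k : ℕ} {o : Fin k → O}
    {a : Fin k → A} {b c : ℝ} (hbdd : ∀ θ ∈ B₁, b ≤ Vval θ π R (H - (k + 1)) k o a)
    (hne : B₂.Nonempty)
    (h : ∀ θ₂ ∈ B₂, ∃ θ₁ ∈ B₁,
      Vval θ₁ π R (H - (k + 1)) k o a ≤ Vval θ₂ π R (H - (k + 1)) k o a + c) :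
    VB B₁ π R H k o a ≤ VB B₂ π R H k o a + c := by
  have hbdd' : BddBelow {w | ∃ θ ∈ B₁, w = Vval θ π R (H - (k + 1)) k o a} := by
    refine ⟨b, ?_⟩
    rintro _ ⟨θ, hθ, rfl⟩
    exact hbdd θ hθ
  obtain ⟨θ₀, hθ₀⟩ := hne
  rw [← sub_le_iff_le_add]
  refine le_csInf ⟨_, θ₀, hθ₀, rfl⟩ ?_
  rintro _ ⟨θ₂, hθ₂, rfl⟩
  obtain ⟨θ₁, hθ₁, hle⟩ := h θ₂ hθ₂
  exact sub_le_iff_le_add.2 ((csInf_le hbdd' ⟨θ₁, hθ₁, rfl⟩).trans hle)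

theorem stmt7 {O A : Type} [Fintype O] [Fintype A]
    (H : ℕ) (hH : 2 ≤ H) (θstar θ : TransModel O A) (π : TPolicy O A)
    (R : (k : ℕ) → (Fin k → O) → (Fin (k + 1) → A) → ℝ)
    (hR0 : ∀ k, k < H → ∀ o a, 0 ≤ R k o a)
    (hR1 : ∀ (o : Fin (H - 1) → O) (a : Fin H → A),
      (∑ k : Fin H, R k.val
        (fun i : Fin k.val => o ⟨i.val, by have h1 := i.isLt; have h2 := k.isLt; omega⟩)
        (fun i : Fin (k.val + 1) => a ⟨i.val, by have h1 := i.isLt; have h2 := k.isLt; omega⟩))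
        ≤ 1)
    (ξ : ℝ) (hξ : 0 ≤ ξ) (CB : ℝ)
    (hCB : ∀ θ' ∈ B1T θstar ξ H, ∀ k, k < H → ∀ (o : Fin k → O) (a : Fin (k + 1) → A),
      Pobs θ' k o a ≤ CB * Pobs θstar k o a) :
    VB (B1T θstar ξ H) π R H 0 (fun i => i.elim0) (fun i => i.elim0)
      - VB (B1T θ ξ H) π R H 0 (fun i => i.elim0) (fun i => i.elim0)
      ≤ CB * ∑ k ∈ Finset.range (H - 1), ∑ o : Fin k → O, ∑ a : Fin (k + 1) → A,
          Ptau θstar π k o a * ∑ ob : O, |θstar.T k o a ob - θ.T k o a ob| := by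
  set g : (k : ℕ) → (Fin k → O) → (Fin (k + 1) → A) → ℝ :=
    fun k o a => ∑ ob, |θstar.T k o a ob - θ.T k o a ob|
  have hg : ∀ k o a, 0 ≤ g k o a := fun _ _ _ => Finset.sum_nonneg fun _ _ => abs_nonneg _
  refine sub_le_iff_le_add'.2 (VB_le_VB_add (b := 0)
    (fun θ₁ _ => Vval_nonneg θ₁ π hR0 (by omega) _ _) ⟨θ, self_mem_B1T θ hξ H⟩ fun θ₂ hθ₂ => ?_)
  obtain ⟨θ₁, hθ₁, hclose⟩ := exists_mem_B1T_l1_le θstar θ hξ hθ₂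
  have hsim := Vval_le_Vval_add θ₁ θ₂ π (by omega) hclose
    (fun n k hk => abs_Vval_le_one θ₂ π hR0 hR1 hk) (fun i => i.elim0) (fun i => i.elim0)
  refine ⟨θ₁, hθ₁, hsim.trans (add_le_add_right ?_ _)⟩
  rw [Finset.mul_sum]
  exact Finset.sum_le_sum fun j hj => expectHist_le_mul_of_Pobs_le θ₁ π
    (hCB θ₁ hθ₁ j (by rw [Finset.mem_range] at hj; omega)) (hg j)
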